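/- arXiv:1810.05531 — 3 statements merged into one kernel-verified Lean document; each statement's English description precedes it below -/
import Mathlib

section
/- For the focal surface X*(u,v) = γ(u) + (1/κ(u))N₁(u) + (tan v/κ(u))N₂ of a tubular surface around a unit-speed planar curve γ with curvature κ ≠ 0: the u-parameter curves are asymptotic (⟨X*_uu, N*⟩ = 0, where N* = -T) if and only if κ'(u) = 0 — hence under the regularity assumption κ' ≠ 0 the u-parameter curves are never asymptotic — while the v-parameter curves are always asymptotic, since ⟨X*_vv, N*⟩ = 0 identically. -/
/-!
The tangential terms of `X*_u` cancel (`T + κ⁻¹ • (-κ • T) = 0`), leaving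
`X*_u = -(κ'/κ²) • (N₁ + tan v • N₂)`. Differentiating once more, the only `T`-component of
`X*_uu` comes from `N₁' = -κ T`, so `⟪X*_uu, -T⟫ = -κ'/κ`. In the `v`-direction `X*_v` is a
multiple of the constant vector `N₂ ⊥ T`, hence so is `X*_vv`.
-/

open Real RealInnerProductSpace

noncomputable def cross3 (x y : EuclideanSpace ℝ (Fin 3)) : EuclideanSpace ℝ (Fin 3) :=
  WithLp.toLp 2 ![x 1 * y 2 - x 2 * y 1,
    x 2 * y 0 - x 0 * y 2,
    x 0 * y 1 - x 1 * y 0]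

open Filter Topology

section FocalCurve

variable {E : Type*} [NormedAddCommGroup E] [NormedSpace ℝ E]

theorem hasDerivAt_focalCurve {γ T N₁ : ℝ → E} {κ : ℝ → ℝ} {κ' u : ℝ} (N₂ : E) (t : ℝ)
    (hγ : HasDerivAt γ (T u) u) (hN₁ : HasDerivAt N₁ ((-κ u) • T u) u)
    (hκ : HasDerivAt κ κ' u) (hκ0 : κ u ≠ 0) :
    HasDerivAt (fun u => γ u + (κ u)⁻¹ • N₁ u + (t / κ u) • N₂)
      ((-κ' / κ u ^ 2) • (N₁ u + t • N₂)) u := by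
  have hinv : HasDerivAt (fun u => (κ u)⁻¹) (-κ' / κ u ^ 2) u := hκ.inv hκ0
  have hdiv : HasDerivAt (fun u => t / κ u) (t * (-κ' / κ u ^ 2)) u := by
    simpa only [div_eq_mul_inv] using hinv.const_mul t
  refine ((hγ.add (hinv.smul hN₁)).add (hdiv.smul_const N₂)).congr_deriv ?_
  rw [smul_smul, inv_mul_eq_div, neg_div, div_self hκ0]
  module

theorem exists_hasDerivAt_focalCurve_deriv {T N₁ : ℝ → E} {κ κ' : ℝ → ℝ} {κ'' u : ℝ}
    (N₂ : E) (t : ℝ) (hN₁ : HasDerivAt N₁ ((-κ u) • T u) u) (hκ' : HasDerivAt κ (κ' u) u)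
    (hκ'' : HasDerivAt κ' κ'' u) (hκ0 : κ u ≠ 0) :
    ∃ c : ℝ, HasDerivAt (fun u => (-κ' u / κ u ^ 2) • (N₁ u + t • N₂))
      ((κ' u / κ u) • T u + c • (N₁ u + t • N₂)) u := by
  have hcoef : DifferentiableAt ℝ (fun u => -κ' u / κ u ^ 2) u :=
    (hκ''.differentiableAt.neg).div (hκ'.differentiableAt.pow 2) (pow_ne_zero 2 hκ0)
  refine ⟨deriv (fun u => -κ' u / κ u ^ 2) u,
    (hcoef.hasDerivAt.smul (hN₁.add_const (t • N₂))).congr_deriv ?_⟩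
  rw [smul_smul, show -κ' u / κ u ^ 2 * -κ u = κ' u / κ u by field_simp]

theorem hasDerivAt_const_add_tan_div_smul (p N₂ : E) (a : ℝ) {v : ℝ} (hv : cos v ≠ 0) :
    HasDerivAt (fun v => p + (tan v / a) • N₂) ((1 / cos v ^ 2 / a) • N₂) v :=
  (((hasDerivAt_tan hv).div_const a).smul_const N₂).const_add p

end FocalCurve

theorem stmt10_general
    (γ T N₁ : ℝ → EuclideanSpace ℝ (Fin 3)) (N₂ : EuclideanSpace ℝ (Fin 3))
    (κ : ℝ → ℝ)
    (hγ : ∀ u, HasDerivAt γ (T u) u)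
    (hN₁ : ∀ u, HasDerivAt N₁ ((-κ u) • T u) u)
    (hTT : ∀ u, ⟪T u, T u⟫ = 1)
    (hTN₁ : ∀ u, ⟪T u, N₁ u⟫ = 0)
    (hTN₂ : ∀ u, ⟪T u, N₂⟫ = 0)
    (κ' : ℝ → ℝ) (hκ' : ∀ u, HasDerivAt κ (κ' u) u)
    (κ'' : ℝ → ℝ) (hκ'' : ∀ u, HasDerivAt κ' (κ'' u) u)
    (Xs : ℝ → ℝ → EuclideanSpace ℝ (Fin 3))
    (hXs : ∀ u v, Xs u v = γ u + (κ u)⁻¹ • N₁ u + (tan v / κ u) • N₂)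
    (Xsu Xsv : ℝ → ℝ → EuclideanSpace ℝ (Fin 3))
    (hXsu : ∀ u v, HasDerivAt (fun u' => Xs u' v) (Xsu u v) u)
    (hXsv : ∀ u v, HasDerivAt (fun v' => Xs u v') (Xsv u v) v)
    (u v : ℝ) (Xsuu Xsvv : EuclideanSpace ℝ (Fin 3))
    (hXsuu : HasDerivAt (fun u' => Xsu u' v) Xsuu u)
    (hXsvv : HasDerivAt (fun v' => Xsv u v') Xsvv v)
    (hκ0 : κ u ≠ 0) (hcos : cos v ≠ 0) :
    (⟪Xsuu, -T u⟫ = 0 ↔ κ' u = 0) ∧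
    (κ' u ≠ 0 → ⟪Xsuu, -T u⟫ ≠ 0) ∧
    ⟪Xsvv, -T u⟫ = 0 := by
  have hXsu_eq : ∀ᶠ u' in 𝓝 u, Xsu u' v = (-κ' u' / κ u' ^ 2) • (N₁ u' + tan v • N₂) :=
    ((hκ' u).continuousAt.eventually_ne hκ0).mono fun u' hu' => (hXsu u' v).unique <| by
      simpa only [hXs] using hasDerivAt_focalCurve N₂ (tan v) (hγ u') (hN₁ u') (hκ' u') hu'
  obtain ⟨c, hc⟩ :=
    exists_hasDerivAt_focalCurve_deriv N₂ (tan v) (hN₁ u) (hκ' u) (hκ'' u) hκ0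
  have hXsuu_eq : Xsuu = (κ' u / κ u) • T u + c • (N₁ u + tan v • N₂) :=
    hXsuu.unique (hc.congr_of_eventuallyEq hXsu_eq)
  have hXsv_eq : ∀ᶠ v' in 𝓝 v, Xsv u v' = (1 / cos v' ^ 2 / κ u) • N₂ :=
    (continuous_cos.continuousAt.eventually_ne hcos).mono fun v' hv' => (hXsv u v').unique <| by
      simpa only [hXs] using hasDerivAt_const_add_tan_div_smul _ N₂ (κ u) hv'
  have hsec : DifferentiableAt ℝ (fun v' => 1 / cos v' ^ 2 / κ u) v := by
    fun_prop (disch := exact pow_ne_zero 2 hcos)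
  have hXsvv_eq : Xsvv = deriv (fun v' => 1 / cos v' ^ 2 / κ u) v • N₂ :=
    hXsvv.unique ((hsec.hasDerivAt.smul_const N₂).congr_of_eventuallyEq hXsv_eq)
  have hXsuu_normal : ⟪Xsuu, -T u⟫ = -(κ' u / κ u) := by
    rw [real_inner_comm, hXsuu_eq]
    simp only [inner_neg_left, inner_add_right, real_inner_smul_right, hTT, hTN₁, hTN₂]
    ring
  have hu_asymptotic : ⟪Xsuu, -T u⟫ = 0 ↔ κ' u = 0 := by
    rw [hXsuu_normal, neg_eq_zero, div_eq_zero_iff, or_iff_left hκ0]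
  refine ⟨hu_asymptotic, hu_asymptotic.not.mpr, ?_⟩
  rw [real_inner_comm, hXsvv_eq, inner_neg_left, real_inner_smul_right, hTN₂, mul_zero, neg_zero]

theorem stmt10
    (γ T N₁ : ℝ → EuclideanSpace ℝ (Fin 3)) (N₂ : EuclideanSpace ℝ (Fin 3))
    (κ : ℝ → ℝ)
    (hγ : ∀ u, HasDerivAt γ (T u) u)
    (hT : ∀ u, HasDerivAt T (κ u • N₁ u) u)
    (hN₁ : ∀ u, HasDerivAt N₁ ((-κ u) • T u) u)
    (hTT : ∀ u, ⟪T u, T u⟫ = 1)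
    (hN₁N₁ : ∀ u, ⟪N₁ u, N₁ u⟫ = 1)
    (hN₂N₂ : ⟪N₂, N₂⟫ = 1)
    (hTN₁ : ∀ u, ⟪T u, N₁ u⟫ = 0)
    (hTN₂ : ∀ u, ⟪T u, N₂⟫ = 0)
    (hN₁N₂ : ∀ u, ⟪N₁ u, N₂⟫ = 0)
    (horient : ∀ u, cross3 (T u) (N₁ u) = N₂)
    (κ' : ℝ → ℝ) (hκ' : ∀ u, HasDerivAt κ (κ' u) u)
    (κ'' : ℝ → ℝ) (hκ'' : ∀ u, HasDerivAt κ' (κ'' u) u)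
    (Xs : ℝ → ℝ → EuclideanSpace ℝ (Fin 3))
    (hXs : ∀ u v, Xs u v = γ u + (κ u)⁻¹ • N₁ u + (tan v / κ u) • N₂)
    (Xsu Xsv : ℝ → ℝ → EuclideanSpace ℝ (Fin 3))
    (hXsu : ∀ u v, HasDerivAt (fun u' => Xs u' v) (Xsu u v) u)
    (hXsv : ∀ u v, HasDerivAt (fun v' => Xs u v') (Xsv u v) v)
    (u v : ℝ) (Xsuu Xsuv Xsvv : EuclideanSpace ℝ (Fin 3))
    (hXsuu : HasDerivAt (fun u' => Xsu u' v) Xsuu u)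
    (hXsuv : HasDerivAt (fun v' => Xsu u v') Xsuv v)
    (hXsvv : HasDerivAt (fun v' => Xsv u v') Xsvv v)
    (hκ0 : κ u ≠ 0) (hcos : cos v ≠ 0) :
    (⟪Xsuu, -T u⟫ = 0 ↔ κ' u = 0) ∧
    (κ' u ≠ 0 → ⟪Xsuu, -T u⟫ ≠ 0) ∧
    ⟪Xsvv, -T u⟫ = 0 :=
  stmt10_general γ T N₁ N₂ κ hγ hN₁ hTT hTN₁ hTN₂ κ' hκ' κ'' hκ'' Xs hXs Xsu Xsv hXsu hXsv u v Xsuu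
    Xsvv hXsuu hXsvv hκ0 hcos
end

section
/- For the focal surface X*(u,v) = γ(u) + (1/κ(u))N₁(u) + (tan v/κ(u))N₂ of a tubular surface around a unit-speed planar curve γ with curvature κ: the u-parameter curves are geodesics (X*_uu × N* = 0 with N* = -T) if and only if -κ''κ + 2(κ')² = 0, whose nontrivial solutions are κ(u) = -1/(c₁u + c₂) for real constants c₁, c₂. -/
open Real RealInnerProductSpace
/-!
Write `ρ = 1/κ`. Differentiating the focal surface along `u`, the terms `T` and `ρ • (-κ T)`
cancel, so `X*_u = ρ' (N₁ + tan v N₂)` and `X*_uu = ρ'' (N₁ + tan v N₂) + (multiple of T)`.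
Hence `X*_uu × (-T) = ρ'' (N₂ - tan v N₁)`, which vanishes exactly when
`ρ'' = (2κ'² - κκ'')/κ³` does. If `ρ'' = 0` on an interval, `ρ` is affine there.
-/

section Cross

variable (a b c : EuclideanSpace ℝ (Fin 3))

lemma cross3_add_left : cross3 (a + b) c = cross3 a c + cross3 b c := by
  ext i; fin_cases i <;> simp [cross3] <;> ring

lemma cross3_smul_left (r : ℝ) : cross3 (r • a) b = r • cross3 a b := by
  ext i; fin_cases i <;> simp [cross3] <;> ring

lemma cross3_neg_right : cross3 a (-b) = -cross3 a b := by
  ext i; fin_cases i <;> simp [cross3] <;> ring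

lemma cross3_anticomm : cross3 a b = -cross3 b a := by
  ext i; fin_cases i <;> simp [cross3] <;> ring

lemma cross3_self : cross3 a a = 0 := by
  ext i; fin_cases i <;> simp [cross3] <;> ring

lemma cross3_cross3_left : cross3 (cross3 a b) c = ⟪a, c⟫ • b - ⟪b, c⟫ • a := by
  ext i; fin_cases i <;> simp [cross3, PiLp.inner_apply, Fin.sum_univ_three] <;> ring

end Cross

lemma cross3_frame_neg_right {T N₁ N₂ : EuclideanSpace ℝ (Fin 3)} (hTT : ⟪T, T⟫ = 1)
    (hTN₁ : ⟪T, N₁⟫ = 0) (horient : cross3 T N₁ = N₂) (a b t : ℝ) :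
    cross3 (a • (N₁ + t • N₂) + b • T) (-T) = a • (N₂ - t • N₁) := by
  have hN₁T : cross3 N₁ T = -N₂ := by rw [cross3_anticomm, horient]
  have hN₂T : cross3 N₂ T = N₁ := by
    rw [← horient, cross3_cross3_left, hTT, real_inner_comm, hTN₁, zero_smul, one_smul,
      sub_zero]
  rw [cross3_neg_right, cross3_add_left, cross3_smul_left, cross3_smul_left, cross3_add_left,
    cross3_smul_left, hN₁T, hN₂T, cross3_self]
  module

lemma smul_sub_smul_eq_zero_iff {E : Type*} [NormedAddCommGroup E] [InnerProductSpace ℝ E]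
    {N₁ N₂ : E} (hN₂N₂ : ⟪N₂, N₂⟫ = 1) (hN₁N₂ : ⟪N₁, N₂⟫ = 0) (a t : ℝ) :
    a • (N₂ - t • N₁) = 0 ↔ a = 0 := by
  refine ⟨fun h => ?_, fun h => by rw [h, zero_smul]⟩
  have := congrArg (⟪·, N₂⟫) h
  simpa only [real_inner_smul_left, inner_sub_left, hN₂N₂, hN₁N₂, inner_zero_left, mul_zero,
    sub_zero, mul_one] using this

theorem Convex.is_const_of_hasDerivAt_eq_zero {G : Type*} [NormedAddCommGroup G]
    [NormedSpace ℝ G] {f f' : ℝ → G} {s : Set ℝ} (hs : Convex ℝ s)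
    (hf : ∀ x ∈ s, HasDerivAt f (f' x) x) (hf' : ∀ x ∈ s, f' x = 0) {x y : ℝ}
    (hx : x ∈ s) (hy : y ∈ s) : f x = f y := by
  have := hs.norm_image_sub_le_of_norm_hasDerivWithin_le (C := 0)
    (fun z hz => (hf z hz).hasDerivWithinAt) (fun z hz => by simp [hf' z hz]) hx hy
  rw [zero_mul, norm_le_zero_iff, sub_eq_zero] at this
  exact this.symm

theorem Convex.exists_eq_mul_add_of_second_deriv_eq_zero {f f' f'' : ℝ → ℝ} {s : Set ℝ}
    (hs : Convex ℝ s) (hf : ∀ x, HasDerivAt f (f' x) x) (hf' : ∀ x, HasDerivAt f' (f'' x) x)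
    (hf'' : ∀ x ∈ s, f'' x = 0) : ∃ a b : ℝ, ∀ x ∈ s, f x = a * x + b := by
  rcases s.eq_empty_or_nonempty with rfl | ⟨x₀, hx₀⟩
  · exact ⟨0, 0, fun x hx => hx.elim⟩
  have hslope : ∀ x ∈ s, f' x = f' x₀ := fun x hx =>
    hs.is_const_of_hasDerivAt_eq_zero (fun y _ => hf' y) hf'' hx hx₀
  refine ⟨f' x₀, f x₀ - f' x₀ * x₀, fun x hx => ?_⟩
  have := hs.is_const_of_hasDerivAt_eq_zero (f := fun y => f y - f' x₀ * y)
    (fun y _ => (hf y).sub ((hasDerivAt_id y).const_mul (f' x₀)))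
    (fun y hy => by rw [hslope y hy, mul_one, sub_self]) hx hx₀
  linarith

lemma hasDerivAt_neg_div_sq {f f' f'' : ℝ → ℝ} {x : ℝ} (hf : HasDerivAt f (f' x) x)
    (hf' : HasDerivAt f' (f'' x) x) (hx : f x ≠ 0) :
    HasDerivAt (fun y => -f' y / f y ^ 2) ((-f'' x * f x + 2 * f' x ^ 2) / f x ^ 3) x := by
  refine (hf'.neg.div (hf.pow 2) (pow_ne_zero 2 hx)).congr_deriv ?_
  simp only [Pi.pow_apply, Pi.neg_apply]
  field_simp
  ring

lemma hasDerivAt_focal_curve {E : Type*} [NormedAddCommGroup E] [NormedSpace ℝ E]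
    {γ T N₁ : ℝ → E} {κ : ℝ → ℝ} {κ' u : ℝ} (N₂ : E) (t : ℝ) (hγ : HasDerivAt γ (T u) u)
    (hN₁ : HasDerivAt N₁ ((-κ u) • T u) u) (hκ : HasDerivAt κ κ' u) (hκ0 : κ u ≠ 0) :
    HasDerivAt (fun x => γ x + (κ x)⁻¹ • N₁ x + (t / κ x) • N₂)
      ((-κ' / κ u ^ 2) • (N₁ u + t • N₂)) u := by
  have hρ := hκ.inv hκ0
  have hN₂ : HasDerivAt (fun x => (t / κ x) • N₂) ((t * (-κ' / κ u ^ 2)) • N₂) u := by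
    simpa only [div_eq_mul_inv, Pi.inv_apply] using (hρ.const_mul t).smul_const N₂
  refine ((hγ.add (hρ.smul hN₁)).add hN₂).congr_deriv ?_
  rw [smul_smul, mul_neg, Pi.inv_apply, inv_mul_cancel₀ hκ0]
  module

theorem stmt11_general
    (γ T N₁ : ℝ → EuclideanSpace ℝ (Fin 3)) (N₂ : EuclideanSpace ℝ (Fin 3))
    (κ : ℝ → ℝ)
    (hγ : ∀ u, HasDerivAt γ (T u) u)
    (hN₁ : ∀ u, HasDerivAt N₁ ((-κ u) • T u) u)
    (hTT : ∀ u, ⟪T u, T u⟫ = 1)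
    (hN₂N₂ : ⟪N₂, N₂⟫ = 1)
    (hTN₁ : ∀ u, ⟪T u, N₁ u⟫ = 0)
    (hN₁N₂ : ∀ u, ⟪N₁ u, N₂⟫ = 0)
    (horient : ∀ u, cross3 (T u) (N₁ u) = N₂)
    (κ' : ℝ → ℝ) (hκ' : ∀ u, HasDerivAt κ (κ' u) u)
    (κ'' : ℝ → ℝ) (hκ'' : ∀ u, HasDerivAt κ' (κ'' u) u)
    (Xs : ℝ → ℝ → EuclideanSpace ℝ (Fin 3))
    (hXs : ∀ u v, Xs u v = γ u + (κ u)⁻¹ • N₁ u + (tan v / κ u) • N₂)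
    (Xsu : ℝ → ℝ → EuclideanSpace ℝ (Fin 3))
    (hXsu : ∀ u v, HasDerivAt (fun u' => Xs u' v) (Xsu u v) u)
    (u v : ℝ) (Xsuu : EuclideanSpace ℝ (Fin 3))
    (hXsuu : HasDerivAt (fun u' => Xsu u' v) Xsuu u)
    (hκ0 : ∀ x, κ x ≠ 0)
    (I : Set ℝ) (hI : I.OrdConnected) :
    (cross3 Xsuu (-T u) = 0 ↔ -κ'' u * κ u + 2 * (κ' u) ^ 2 = 0) ∧
    ((∀ x ∈ I, -κ'' x * κ x + 2 * (κ' x) ^ 2 = 0) →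
      ∃ c₁ c₂ : ℝ, ∀ x ∈ I, κ x = -(1 / (c₁ * x + c₂))) := by
  set ρ' : ℝ → ℝ := fun x => -κ' x / κ x ^ 2
  set ρ'' : ℝ → ℝ := fun x => (-κ'' x * κ x + 2 * κ' x ^ 2) / κ x ^ 3
  have hρ' : ∀ x, HasDerivAt (fun y => (κ y)⁻¹) (ρ' x) x := fun x => (hκ' x).inv (hκ0 x)
  have hρ'' : ∀ x, HasDerivAt ρ' (ρ'' x) x := fun x =>
    hasDerivAt_neg_div_sq (hκ' x) (hκ'' x) (hκ0 x)
  have hXsu_eq : (fun u' => Xsu u' v) = fun x => ρ' x • (N₁ x + tan v • N₂) := funext fun x =>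
    (hXsu x v).unique <| by
      simpa only [hXs] using hasDerivAt_focal_curve N₂ (tan v) (hγ x) (hN₁ x) (hκ' x) (hκ0 x)
  have hXsuu_eq : Xsuu = ρ'' u • (N₁ u + tan v • N₂) + (ρ' u * -κ u) • T u := by
    rw [hXsu_eq] at hXsuu
    rw [hXsuu.unique ((hρ'' u).smul ((hN₁ u).add_const _)), smul_smul, add_comm]
  constructor
  · rw [hXsuu_eq, cross3_frame_neg_right (hTT u) (hTN₁ u) (horient u),
      smul_sub_smul_eq_zero_iff hN₂N₂ (hN₁N₂ u), div_eq_zero_iff,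
      or_iff_left (pow_ne_zero 3 (hκ0 u))]
  · intro hgeod
    obtain ⟨a, b, hab⟩ := hI.convex.exists_eq_mul_add_of_second_deriv_eq_zero hρ' hρ''
      fun x hx => by simp only [ρ'', hgeod x hx, zero_div]
    refine ⟨-a, -b, fun x hx => ?_⟩
    rw [neg_mul, ← neg_add, ← hab x hx, one_div, inv_neg, neg_neg, inv_inv]

theorem stmt11
    (γ T N₁ : ℝ → EuclideanSpace ℝ (Fin 3)) (N₂ : EuclideanSpace ℝ (Fin 3))
    (κ : ℝ → ℝ)
    (hγ : ∀ u, HasDerivAt γ (T u) u)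
    (hT : ∀ u, HasDerivAt T (κ u • N₁ u) u)
    (hN₁ : ∀ u, HasDerivAt N₁ ((-κ u) • T u) u)
    (hTT : ∀ u, ⟪T u, T u⟫ = 1)
    (hN₁N₁ : ∀ u, ⟪N₁ u, N₁ u⟫ = 1)
    (hN₂N₂ : ⟪N₂, N₂⟫ = 1)
    (hTN₁ : ∀ u, ⟪T u, N₁ u⟫ = 0)
    (hTN₂ : ∀ u, ⟪T u, N₂⟫ = 0)
    (hN₁N₂ : ∀ u, ⟪N₁ u, N₂⟫ = 0)
    (horient : ∀ u, cross3 (T u) (N₁ u) = N₂)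
    (κ' : ℝ → ℝ) (hκ' : ∀ u, HasDerivAt κ (κ' u) u)
    (κ'' : ℝ → ℝ) (hκ'' : ∀ u, HasDerivAt κ' (κ'' u) u)
    (Xs : ℝ → ℝ → EuclideanSpace ℝ (Fin 3))
    (hXs : ∀ u v, Xs u v = γ u + (κ u)⁻¹ • N₁ u + (tan v / κ u) • N₂)
    (Xsu Xsv : ℝ → ℝ → EuclideanSpace ℝ (Fin 3))
    (hXsu : ∀ u v, HasDerivAt (fun u' => Xs u' v) (Xsu u v) u)
    (hXsv : ∀ u v, HasDerivAt (fun v' => Xs u v') (Xsv u v) v)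
    (u v : ℝ) (Xsuu Xsuv Xsvv : EuclideanSpace ℝ (Fin 3))
    (hXsuu : HasDerivAt (fun u' => Xsu u' v) Xsuu u)
    (hXsuv : HasDerivAt (fun v' => Xsu u v') Xsuv v)
    (hXsvv : HasDerivAt (fun v' => Xsv u v') Xsvv v)
    (hκ0 : ∀ x, κ x ≠ 0) (hcos : cos v ≠ 0)
    (I : Set ℝ) (hI : I.OrdConnected) (hne : I.Nonempty) :
    (cross3 Xsuu (-T u) = 0 ↔ -κ'' u * κ u + 2 * (κ' u) ^ 2 = 0) ∧
    ((∀ x ∈ I, -κ'' x * κ x + 2 * (κ' x) ^ 2 = 0) →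
      ∃ c₁ c₂ : ℝ, ∀ x ∈ I, κ x = -(1 / (c₁ * x + c₂))) :=
  stmt11_general γ T N₁ N₂ κ hγ hN₁ hTT hN₂N₂ hTN₁ hN₁N₂ horient κ' hκ' κ'' hκ'' Xs hXs Xsu hXsu u v
    Xsuu hXsuu hκ0 I hI
end

section
/- For the focal surface of a Darboux-frame tubular surface with b = k_g cos v + k_n sin v ≠ 0 and N* = T: the u-parameter curves are asymptotic (⟨X*_uu, N*⟩ = 0) if and only if b_u - b_v τ_g = 0, which contradicts regularity of the focal surface; and the v-parameter curves are always asymptotic, since ⟨X*_vv, N*⟩ = 0, because X*_vv has no T-component. -/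
/-!
The unit normal of the focal surface is `T`, so `⟪X*_u, T⟫` vanishes identically near `u`;
differentiating in `u` gives `⟪X*_uu, T⟫ = -⟪X*_u, T'⟫`, and the Darboux equations turn the
right-hand side into `(b_u - b_v τ_g) / b`. Along a `v`-curve `u` is fixed and `⟪X*, T⟫ = ⟪γ, T⟫`
is constant, so differentiating twice in `v` gives `⟪X*_vv, T⟫ = 0`.
-/

open Real RealInnerProductSpace Filter Topology

section InnerDeriv

variable {E : Type*} [NormedAddCommGroup E] [InnerProductSpace ℝ E]

theorem HasDerivAt.inner_add_inner_eq_zero_of_eventuallyEq_const {F G : ℝ → E} {F' G' : E}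
    {x c : ℝ} (hF : HasDerivAt F F' x) (hG : HasDerivAt G G' x)
    (h : (fun s => ⟪F s, G s⟫) =ᶠ[𝓝 x] fun _ => c) : ⟪F x, G'⟫ + ⟪F', G x⟫ = 0 :=
  (hF.inner ℝ hG).unique ((hasDerivAt_const x c).congr_of_eventuallyEq h)

theorem inner_eq_zero_of_hasDerivAt_of_inner_const {f f' : ℝ → E} {f'' n : E} {t₀ a : ℝ}
    (hf : ∀ t, HasDerivAt f (f' t) t) (hf' : HasDerivAt f' f'' t₀) (hn : ∀ t, ⟪f t, n⟫ = a) :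
    ⟪f'', n⟫ = 0 := by
  have hf'n : ∀ t, ⟪f' t, n⟫ = 0 := fun t => by
    simpa using (hf t).inner_add_inner_eq_zero_of_eventuallyEq_const (hasDerivAt_const t n)
      (Eventually.of_forall hn)
  simpa using hf'.inner_add_inner_eq_zero_of_eventuallyEq_const (hasDerivAt_const t₀ n)
    (Eventually.of_forall hf'n)

end InnerDeriv

theorem hasDerivAt_focal_u {E : Type*} [NormedAddCommGroup E] [NormedSpace ℝ E]
    {γ T Y U : ℝ → E} {kg kn τg kg' kn' : ℝ → ℝ} {s : ℝ} (v : ℝ)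
    (hγ : HasDerivAt γ (T s) s) (hY : HasDerivAt Y ((-kg s) • T s + τg s • U s) s)
    (hU : HasDerivAt U ((-kn s) • T s + (-τg s) • Y s) s)
    (hkg : HasDerivAt kg (kg' s) s) (hkn : HasDerivAt kn (kn' s) s)
    (hb : kg s * cos v + kn s * sin v ≠ 0) :
    HasDerivAt (fun t => γ t + (kg t * cos v + kn t * sin v)⁻¹ • (cos v • Y t + sin v • U t))
      ((τg s / (kg s * cos v + kn s * sin v)) • (cos v • U s - sin v • Y s) -
        ((kg' s * cos v + kn' s * sin v) / (kg s * cos v + kn s * sin v) ^ 2) •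
          (cos v • Y s + sin v • U s)) s := by
  have hb' : HasDerivAt (fun t => kg t * cos v + kn t * sin v) (kg' s * cos v + kn' s * sin v) s :=
    (hkg.mul_const _).add (hkn.mul_const _)
  refine (hγ.add ((hb'.inv hb).smul
    ((hY.const_smul (cos v)).add (hU.const_smul (sin v))))).congr_deriv ?_
  simp only [Pi.inv_apply, Pi.add_apply, Pi.smul_apply]
  -- the `T`-components cancel because the denominator is `kg s * cos v + kn s * sin v`
  match_scalars <;> field_simp <;> ring

theorem stmt19_general
    (γ T Y U : ℝ → EuclideanSpace ℝ (Fin 3))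
    (kg kn τg : ℝ → ℝ)
    (hγ : ∀ u, HasDerivAt γ (T u) u)
    (hT : ∀ u, HasDerivAt T (kg u • Y u + kn u • U u) u)
    (hY : ∀ u, HasDerivAt Y ((-kg u) • T u + τg u • U u) u)
    (hU : ∀ u, HasDerivAt U ((-kn u) • T u + (-τg u) • Y u) u)
    (hYY : ∀ u, ⟪Y u, Y u⟫ = 1)
    (hUU : ∀ u, ⟪U u, U u⟫ = 1)
    (hTY : ∀ u, ⟪T u, Y u⟫ = 0)
    (hTU : ∀ u, ⟪T u, U u⟫ = 0)
    (hYU : ∀ u, ⟪Y u, U u⟫ = 0)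
    (kg' kn' : ℝ → ℝ)
    (hkg' : ∀ u, HasDerivAt kg (kg' u) u)
    (hkn' : ∀ u, HasDerivAt kn (kn' u) u)
    (Xs : ℝ → ℝ → EuclideanSpace ℝ (Fin 3))
    (hXs : ∀ u v, Xs u v =
      γ u + (kg u * cos v + kn u * sin v)⁻¹ • ((cos v) • Y u + (sin v) • U u))
    (Xsu Xsv : ℝ → ℝ → EuclideanSpace ℝ (Fin 3))
    (hXsu : ∀ u v, HasDerivAt (fun u' => Xs u' v) (Xsu u v) u)
    (hXsv : ∀ u v, HasDerivAt (fun v' => Xs u v') (Xsv u v) v)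
    (u v : ℝ) (Xsuu Xsvv : EuclideanSpace ℝ (Fin 3))
    (hXsuu : HasDerivAt (fun u' => Xsu u' v) Xsuu u)
    (hXsvv : HasDerivAt (fun v' => Xsv u v') Xsvv v)
    (b bu bv : ℝ)
    (hb : b = kg u * cos v + kn u * sin v)
    (hbu : bu = kg' u * cos v + kn' u * sin v)
    (hbv : bv = -kg u * sin v + kn u * cos v)
    (hb0 : b ≠ 0) :
    (⟪Xsuu, T u⟫ = 0 ↔ bu - bv * τg u = 0) ∧
    ⟪Xsvv, T u⟫ = 0 := by
  have hYT s : ⟪Y s, T s⟫ = 0 := real_inner_comm (Y s) (T s) ▸ hTY s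
  have hUT s : ⟪U s, T s⟫ = 0 := real_inner_comm (U s) (T s) ▸ hTU s
  have hUY s : ⟪U s, Y s⟫ = 0 := real_inner_comm (U s) (Y s) ▸ hYU s
  have hvv : ⟪Xsvv, T u⟫ = 0 := inner_eq_zero_of_hasDerivAt_of_inner_const (hXsv u) hXsvv
    (a := ⟪γ u, T u⟫) fun v' => by simp [hXs, inner_add_left, inner_smul_left, hYT, hUT]
  have hXsu_eq s (hs : kg s * cos v + kn s * sin v ≠ 0) := (hXsu s v).unique <| by
    simpa only [← hXs] using hasDerivAt_focal_u v (hγ s) (hY s) (hU s) (hkg' s) (hkn' s) hs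
  have hb_near : ∀ᶠ s in 𝓝 u, kg s * cos v + kn s * sin v ≠ 0 :=
    ContinuousAt.eventually_ne (g := fun s => kg s * cos v + kn s * sin v)
      (((hkg' u).mul_const (cos v)).add ((hkn' u).mul_const (sin v))).continuousAt (hb ▸ hb0)
  have hnormal : (fun s => ⟪Xsu s v, T s⟫) =ᶠ[𝓝 u] fun _ => 0 := hb_near.mono fun s hs => by
    simp [hXsu_eq s hs, inner_sub_left, inner_add_left, inner_smul_left, hYT, hUT]
  have hdiff := hXsuu.inner_add_inner_eq_zero_of_eventuallyEq_const (hT u) hnormal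
  have hXsu_dT : ⟪Xsu u v, kg u • Y u + kn u • U u⟫ = -((bu - bv * τg u) / b) := by
    subst hb hbu hbv
    simp only [hXsu_eq u hb0, inner_sub_left, inner_add_left, inner_smul_left, inner_add_right,
      inner_smul_right, conj_trivial, hYY, hUU, hYU, hUY]
    field_simp
    ring
  have hXsuu_T : ⟪Xsuu, T u⟫ = (bu - bv * τg u) / b := by linarith [hdiff, hXsu_dT]
  exact ⟨by rw [hXsuu_T, div_eq_zero_iff, or_iff_left hb0], hvv⟩

theorem stmt19
    (γ T Y U : ℝ → EuclideanSpace ℝ (Fin 3))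
    (kg kn τg : ℝ → ℝ)
    (hγ : ∀ u, HasDerivAt γ (T u) u)
    (hT : ∀ u, HasDerivAt T (kg u • Y u + kn u • U u) u)
    (hY : ∀ u, HasDerivAt Y ((-kg u) • T u + τg u • U u) u)
    (hU : ∀ u, HasDerivAt U ((-kn u) • T u + (-τg u) • Y u) u)
    (hTT : ∀ u, ⟪T u, T u⟫ = 1)
    (hYY : ∀ u, ⟪Y u, Y u⟫ = 1)
    (hUU : ∀ u, ⟪U u, U u⟫ = 1)
    (hTY : ∀ u, ⟪T u, Y u⟫ = 0)
    (hTU : ∀ u, ⟪T u, U u⟫ = 0)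
    (hYU : ∀ u, ⟪Y u, U u⟫ = 0)
    (horient : ∀ u, cross3 (T u) (Y u) = U u)
    (kg' kn' : ℝ → ℝ)
    (hkg' : ∀ u, HasDerivAt kg (kg' u) u)
    (hkn' : ∀ u, HasDerivAt kn (kn' u) u)
    (Xs : ℝ → ℝ → EuclideanSpace ℝ (Fin 3))
    (hXs : ∀ u v, Xs u v =
      γ u + (kg u * cos v + kn u * sin v)⁻¹ • ((cos v) • Y u + (sin v) • U u))
    (Xsu Xsv : ℝ → ℝ → EuclideanSpace ℝ (Fin 3))
    (hXsu : ∀ u v, HasDerivAt (fun u' => Xs u' v) (Xsu u v) u)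
    (hXsv : ∀ u v, HasDerivAt (fun v' => Xs u v') (Xsv u v) v)
    (u v : ℝ) (Xsuu Xsuv Xsvv : EuclideanSpace ℝ (Fin 3))
    (hXsuu : HasDerivAt (fun u' => Xsu u' v) Xsuu u)
    (hXsuv : HasDerivAt (fun v' => Xsu u v') Xsuv v)
    (hXsvv : HasDerivAt (fun v' => Xsv u v') Xsvv v)
    (b bu bv : ℝ)
    (hb : b = kg u * cos v + kn u * sin v)
    (hbu : bu = kg' u * cos v + kn' u * sin v)
    (hbv : bv = -kg u * sin v + kn u * cos v)
    (hb0 : b ≠ 0)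
    (hreg : bu - bv * τg u ≠ 0) :
    (⟪Xsuu, T u⟫ = 0 ↔ bu - bv * τg u = 0) ∧
    ⟪Xsvv, T u⟫ = 0 :=
  stmt19_general γ T Y U kg kn τg hγ hT hY hU hYY hUU hTY hTU hYU kg' kn' hkg' hkn' Xs hXs Xsu Xsv
    hXsu hXsv u v Xsuu Xsvv hXsuu hXsvv b bu bv hb hbu hbv hb0
end
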